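/- arXiv:1806.00008 — 2 statements merged into one kernel-verified Lean document; each statement's English description precedes it below -/
import Mathlib

section
/- Let φ: M → N be a homomorphism of finite abelian groups. For g ∈ Fun(N), the Fourier transform of the pullback satisfies 𝔉_M(φ^* g) = √(#M/#N) · (φ^∨)_*(𝔉_N g), where (φ^∨)_* denotes fiberwise sum along the dual homomorphism φ^∨: N^∨ → M^∨. -/
noncomputable section

/-- The finite Fourier transform `Fun(M) → Fun(M^∨)`,
`(𝔉_M f)(χ) = (1/√#M) ∑ₐ conj(χ a) f a`. -/
def fourierT (M : Type*) [CommGroup M] [Fintype M] (f : M → ℂ) (χ : M →* Circle) : ℂ :=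
  ((Real.sqrt (Fintype.card M) : ℂ))⁻¹ * ∑ a : M, (starRingEnd ℂ) (χ a : ℂ) * f a

/-!
Everything reduces to one identity for `b : N`:
`#M · ∑_{ν ∘ φ = ω} conj (ν b) = #N · ∑_{φ m = b} conj (ω m)`.
Both sides are the double sum `∑_ν ∑_m conj (ν b) · conj (ω m) · ν (φ m)`: orthogonality of
characters of `M` evaluates the inner sum over `m` to `#M · [ν ∘ φ = ω]`, while orthogonality
of the characters of `N` evaluates the sum over `ν` to `#N · [φ m = b]`. Summing against `g`
and comparing normalisations gives the theorem.
-/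

open Finset ComplexConjugate

namespace MonoidHom

variable {G : Type*} [CommGroup G]

def circleEquivAddChar (G : Type*) [CommGroup G] [Finite G] :
    (G →* Circle) ≃ AddChar (Additive G) ℂ :=
  ((MulEquiv.monoidHomCongrLeft (MulEquiv.multiplicativeAdditive G).symm).toEquiv.trans
    AddChar.toMonoidHomEquiv.symm).trans AddChar.circleEquivComplex.toEquiv

@[simp]
lemma circleEquivAddChar_apply [Finite G] (χ : G →* Circle) (a : G) :
    circleEquivAddChar G χ (Additive.ofMul a) = χ a := rfl

lemma circleEquivAddChar_eq_zero_iff [Finite G] (χ : G →* Circle) :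
    circleEquivAddChar G χ = 0 ↔ χ = 1 := by
  refine ⟨fun h => ext fun a => Circle.ext ?_, fun h => ?_⟩
  · simpa using congr($h (Additive.ofMul a))
  · subst h; ext a; rfl

instance [Finite G] : Finite (G →* Circle) := .of_equiv _ (circleEquivAddChar G).symm

instance [Fintype G] : Fintype (G →* Circle) := .ofFinite _

lemma conj_circle_apply (χ : G →* Circle) (a : G) : conj (χ a : ℂ) = χ a⁻¹ := by
  rw [← Circle.coe_inv_eq_conj, map_inv]

lemma sum_circle_apply_eq_ite [Fintype G] [DecidableEq G] (a : G) :
    ∑ χ : G →* Circle, (χ a : ℂ) = if a = 1 then (Fintype.card G : ℂ) else 0 := by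
  have h := Fintype.sum_equiv (circleEquivAddChar G) (fun χ : G →* Circle => (χ a : ℂ))
    (· (Additive.ofMul a)) fun _ => rfl
  rw [h, AddChar.sum_apply_eq_ite]
  simp

lemma sum_circle_eq_ite [Fintype G] (χ : G →* Circle) [Decidable (χ = 1)] :
    ∑ a : G, (χ a : ℂ) = if χ = 1 then (Fintype.card G : ℂ) else 0 := by
  classical
  have h := Fintype.sum_equiv Additive.ofMul (fun a => (χ a : ℂ)) (circleEquivAddChar G χ)
    fun _ => rfl
  rw [h, AddChar.sum_eq_ite]
  simp [circleEquivAddChar_eq_zero_iff]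

end MonoidHom

open MonoidHom

section Fibers

variable {M N : Type*} [CommGroup M] [Fintype M] [CommGroup N] [Fintype N]

open scoped Classical in
lemma card_mul_sum_conj_of_comp_eq (φ : M →* N) (ω : M →* Circle) (b : N) :
    (Fintype.card M : ℂ) * ∑ ν : N →* Circle with ν.comp φ = ω, conj (ν b : ℂ) =
      Fintype.card N * ∑ m with φ m = b, conj (ω m : ℂ) := by
  have sum_over_M (ν : N →* Circle) :
      ∑ m, conj (ω m : ℂ) * ν (φ m) = if ν.comp φ = ω then (Fintype.card M : ℂ) else 0 := by
    calc _ = ∑ m, ((ν.comp φ * ω⁻¹) m : ℂ) := by simp [conj_circle_apply, mul_comm]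
      _ = _ := by simp_rw [sum_circle_eq_ite, mul_inv_eq_one]
  have sum_over_dual (m : M) :
      ∑ ν : N →* Circle, conj (ν b : ℂ) * ν (φ m) =
        if φ m = b then (Fintype.card N : ℂ) else 0 := by
    calc _ = ∑ ν : N →* Circle, (ν (b⁻¹ * φ m) : ℂ) := by simp [conj_circle_apply]
      _ = _ := by simp_rw [sum_circle_apply_eq_ite, inv_mul_eq_one, eq_comm]
  calc (Fintype.card M : ℂ) * ∑ ν : N →* Circle with ν.comp φ = ω, conj (ν b : ℂ)
      = ∑ ν : N →* Circle, ∑ m, conj (ν b : ℂ) * (conj (ω m : ℂ) * ν (φ m)) := by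
        simp_rw [← mul_sum, sum_over_M, mul_ite, mul_zero, sum_ite, sum_const_zero, add_zero,
          ← sum_mul, mul_comm]
    _ = ∑ m, conj (ω m : ℂ) * ∑ ν : N →* Circle, conj (ν b : ℂ) * ν (φ m) := by
        rw [sum_comm]; simp_rw [mul_sum, mul_left_comm]
    _ = _ := by
        simp_rw [sum_over_dual, mul_ite, mul_zero, sum_ite, sum_const_zero, add_zero,
          ← sum_mul, mul_comm]

end Fibers

lemma Real.sqrt_div_mul_inv_sqrt_mul_div {a b : ℝ} (ha : 0 < a) (hb : 0 < b) :
    √(a / b) * (√b)⁻¹ * (b / a) = (√a)⁻¹ := by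
  rw [Real.sqrt_div ha.le]
  field_simp
  rw [Real.sq_sqrt ha.le, Real.sq_sqrt hb.le, mul_comm]

theorem fourier_pullback
    (M N : Type*) [CommGroup M] [Fintype M] [CommGroup N] [Fintype N]
    (φ : M →* N) (g : N → ℂ) (ω : M →* Circle) :
    fourierT M (fun m => g (φ m)) ω =
      (Real.sqrt ((Fintype.card M : ℝ) / (Fintype.card N : ℝ)) : ℂ) *
        ∑ᶠ (ν : N →* Circle) (_ : ν.comp φ = ω), fourierT N g ν := by
  classical
  have hM : (0 : ℝ) < Fintype.card M := mod_cast Fintype.card_pos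
  have hN : (0 : ℝ) < Fintype.card N := mod_cast Fintype.card_pos
  have fiber (b : N) : ∑ ν : N →* Circle with ν.comp φ = ω, conj (ν b : ℂ) =
      (Fintype.card N / Fintype.card M : ℂ) * ∑ m with φ m = b, conj (ω m : ℂ) := by
    rw [div_mul_eq_mul_div, eq_div_iff (mod_cast hM.ne'), mul_comm,
      card_mul_sum_conj_of_comp_eq]
  have regroup : ∑ b, (∑ m with φ m = b, conj (ω m : ℂ)) * g b =
      ∑ m, conj (ω m : ℂ) * g (φ m) := by
    rw [← sum_fiberwise univ φ]
    refine sum_congr rfl fun b _ => ?_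
    rw [sum_mul]
    exact sum_congr rfl fun m hm => by rw [(mem_filter.1 hm).2]
  rw [finsum_cond_eq_sum_of_cond_iff _ (t := {ν | ν.comp φ = ω}) (by simp)]
  simp only [fourierT, ← mul_sum]
  rw [sum_comm]
  simp_rw [← sum_mul, fiber, mul_assoc, ← mul_sum, regroup]
  rw [← Complex.ofReal_inv, ← Real.sqrt_div_mul_inv_sqrt_mul_div hM hN]
  push_cast
  ring

end
end

section
/- Let M be a finite abelian group, i: M' ↪ M an injective homomorphism and π: M ↠ M'' a surjective homomorphism with π ∘ i = 0. Set K = ker π, H = ker π / im i, and dually K̃ = ker i^∨ ⊆ M^∨, H̃ = ker i^∨ / im π^∨. Let j: K ↪ M, p: K ↠ H, j̃: K̃ ↪ M^∨, p̃: K̃ ↠ H̃ be the natural maps. Then for any Θ ∈ Fun(M): 𝔉_H(p_* j^* Θ) = (#K / √(#M · #H)) · p̃_* j̃^* 𝔉_M(Θ). -/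
open scoped Classical

noncomputable section

/-- The finite Fourier transform `(𝔉_M f)(χ) = (1/√#M) ∑ₐ conj(χ a) f a`,
for characters `χ : M →* Circle` valued in the unit circle. -/
def fourierN {M : Type*} [Group M] (f : M → ℂ) (χ : M →* Circle) : ℂ :=
  ((Real.sqrt (Nat.card M) : ℂ))⁻¹ * ∑ᶠ a : M, (starRingEnd ℂ) (χ a : ℂ) * f a

/-- Pushforward (fiberwise sum) of a function along a map. -/
def pushforwardN {α β : Type*} (φ : α → β) (f : α → ℂ) : β → ℂ :=
  fun b => ∑ᶠ (a : α) (_ : φ a = b), f a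

/-
Write `S = ∑_{k ∈ ker π} conj(χ k) Θ k`. Since `χ` is constant on the cosets of `im i`, the Fourier
coefficient of the pushforward to `H` at the descended character is `S / √#H`. On the other side,
summing `𝔉_M Θ (χ · π^∨ψ)` over `ψ` and using orthogonality of the characters of `M''` cuts the sum
over `M` down to `ker π`, giving `#M'' · S / √#M`. The two scalars agree because `#M = #ker π · #M''`.
-/

open ComplexConjugate

section Characters

variable {G : Type*} [CommGroup G] [Finite G]

variable (G) in
def monoidHomCircleEquivAddChar : (G →* Circle) ≃ AddChar (Additive G) ℂ :=
  (AddChar.toMonoidHomEquiv (A := Additive G) (M := Circle)).symm.trans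
    AddChar.circleEquivComplex.toEquiv

instance : Finite (G →* Circle) := .of_equiv _ (monoidHomCircleEquivAddChar G).symm

theorem finsum_monoidHom_circle_apply (x : G) :
    ∑ᶠ ψ : G →* Circle, (ψ x : ℂ) = if x = 1 then (Nat.card G : ℂ) else 0 := by
  have := Fintype.ofFinite G
  rw [← finsum_comp_equiv (monoidHomCircleEquivAddChar G).symm, finsum_eq_sum_of_fintype]
  exact (AddChar.sum_apply_eq_ite (Additive.ofMul x)).trans (by simp [Nat.card_eq_fintype_card])

theorem finsum_conj_monoidHom_circle_apply (x : G) :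
    ∑ᶠ ψ : G →* Circle, conj (ψ x : ℂ) = if x = 1 then (Nat.card G : ℂ) else 0 := by
  simp_rw [← Circle.coe_inv_eq_conj, ← map_inv, finsum_monoidHom_circle_apply, inv_eq_one]

end Characters

theorem finsum_mul_pushforwardN {α β : Type*} [Finite α] [Finite β] (φ : α → β) (g : β → ℂ)
    (f : α → ℂ) : ∑ᶠ b, g b * pushforwardN φ f b = ∑ᶠ a, g (φ a) * f a := by
  have := Fintype.ofFinite α
  have := Fintype.ofFinite β
  simp only [pushforwardN, finsum_eq_sum_of_fintype, finsum_eq_if, Finset.mul_sum, mul_ite,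
    mul_zero]
  rw [Finset.sum_comm]
  simp only [Finset.sum_ite_eq, Finset.mem_univ, if_true]

theorem fourierN_pushforwardN {K H : Type*} [Finite K] [Group H] [Finite H] (φ : K → H) (f : K → ℂ) (χ : H →* Circle) :
    fourierN (pushforwardN φ f) χ = (√(Nat.card H) : ℂ)⁻¹ * ∑ᶠ k, conj (χ (φ k) : ℂ) * f k := by
  rw [fourierN, finsum_mul_pushforwardN]

theorem finsum_fourierN_mul_comp {M N : Type*} [CommGroup M] [Finite M] [CommGroup N] [Finite N]
    (π : M →* N) (Θ : M → ℂ) (χ : M →* Circle) :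
    ∑ᶠ ψ : N →* Circle, fourierN Θ (χ * ψ.comp π) =
      (√(Nat.card M) : ℂ)⁻¹ * (Nat.card N * ∑ᶠ k : π.ker, conj (χ k : ℂ) * Θ k) := by
  have := Fintype.ofFinite M
  have := Fintype.ofFinite (N →* Circle)
  simp only [fourierN, finsum_eq_sum_of_fintype, ← Finset.mul_sum]
  congr 1
  have hchar (a : M) : ∑ ψ : N →* Circle, conj (ψ (π a) : ℂ) =
      if π a = 1 then (Nat.card N : ℂ) else 0 := by
    rw [← finsum_eq_sum_of_fintype, finsum_conj_monoidHom_circle_apply]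
  calc ∑ ψ : N →* Circle, ∑ a, conj ((χ * ψ.comp π) a : ℂ) * Θ a
      = ∑ a, (∑ ψ : N →* Circle, conj (ψ (π a) : ℂ)) * (conj (χ a : ℂ) * Θ a) := by
        rw [Finset.sum_comm]
        refine Finset.sum_congr rfl fun a _ => ?_
        rw [Finset.sum_mul]
        refine Finset.sum_congr rfl fun ψ _ => ?_
        rw [MonoidHom.mul_apply, Circle.coe_mul, map_mul, MonoidHom.comp_apply]
        ring
    _ = Nat.card N * ∑ k : π.ker, conj (χ k : ℂ) * Θ k := by
        simp only [hchar, ite_mul, zero_mul, ← Finset.sum_filter, ← Finset.mul_sum]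
        rw [Finset.sum_subtype _ (p := (· ∈ π.ker)) (fun a => by simp [MonoidHom.mem_ker])]

theorem MonoidHom.card_eq_card_ker_mul_of_surjective {G N : Type*} [Group G] [Group N]
    (f : G →* N) (hf : Function.Surjective f) : Nat.card G = Nat.card f.ker * Nat.card N := by
  rw [← f.ker.card_mul_index, Subgroup.index_ker, MonoidHom.range_eq_top.mpr hf,
    Subgroup.card_top]

theorem inv_sqrt_eq_div_sqrt_mul {k n : ℝ} (hk : 0 < k) (hn : 0 < n) (h : ℝ) :
    (√h)⁻¹ = k / √(k * n * h) * ((√(k * n))⁻¹ * n) := by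
  have hkn : 0 < k * n := mul_pos hk hn
  rw [Real.sqrt_mul hkn.le]
  field_simp
  rw [Real.sq_sqrt hkn.le]

/-
The right-hand side `p̃_* j̃^* 𝔉_M(Θ)` is evaluated at the class of `χ ∈ K̃` in `H̃`: that fiber is
the coset `χ · im π^∨`, and `π^∨` is injective since `π` is surjective, so the fiber sum is the sum
over `ψ ∈ (M'')^∨`. The left-hand side is evaluated at the character of `H` induced by `χ`.
-/
theorem fourier_subquotient_duality
    {M M' M'' : Type*} [CommGroup M] [Finite M] [CommGroup M']
    [CommGroup M''] [Finite M'']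
    (i : M' →* M) (π : M →* M'')
    (hπ : Function.Surjective π)
    (Θ : M → ℂ) (χ : M →* Circle) (hχ : χ.comp i = 1) :
    fourierN
      (pushforwardN (⇑(QuotientGroup.mk' ((i.range).subgroupOf π.ker)))
        (fun k : π.ker => Θ (k : M)))
      (QuotientGroup.lift ((i.range).subgroupOf π.ker) (χ.comp π.ker.subtype)
        (fun x hx => by
          obtain ⟨m', hm'⟩ := MonoidHom.mem_range.mp (Subgroup.mem_subgroupOf.mp hx)
          have h1 : χ (i m') = 1 := by simpa using DFunLike.congr_fun hχ m'
          simpa [hm'] using h1))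
      = (((Nat.card π.ker : ℝ) /
            Real.sqrt ((Nat.card M : ℝ) *
              (Nat.card (π.ker ⧸ (i.range).subgroupOf π.ker) : ℝ)) : ℝ) : ℂ) *
          ∑ᶠ ψ : M'' →* Circle, fourierN Θ (χ * ψ.comp π) := by
  rw [fourierN_pushforwardN, finsum_fourierN_mul_comp]
  simp only [QuotientGroup.mk'_apply, QuotientGroup.lift_mk, MonoidHom.comp_apply,
    Subgroup.coe_subtype]
  have hscalar := congrArg ((↑) : ℝ → ℂ) <| inv_sqrt_eq_div_sqrt_mul
    (Nat.cast_pos.2 (Nat.card_pos (α := π.ker))) (Nat.cast_pos.2 (Nat.card_pos (α := M'')))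
    (Nat.card (π.ker ⧸ (i.range).subgroupOf π.ker))
  rw [π.card_eq_card_ker_mul_of_surjective hπ]
  push_cast at hscalar ⊢
  linear_combination (∑ᶠ k : π.ker, conj (χ k : ℂ) * Θ k) * hscalar

end
end
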